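/- For all integers b and c, the group G(−1,b,c) = ⟨x, y | (xy)^{−1} x^b, (xy)^{−1} y^c⟩ is isomorphic to the cyclic group ℤ/(bc − b − c)ℤ, i.e., to `ZMod (b*c − b − c).natAbs` (which is ℤ when bc − b − c = 0). -/

import Mathlib

/-- The group `G(-1,b,c) = ⟨x, y | (xy)⁻¹ x^b, (xy)⁻¹ y^c⟩`. -/
abbrev Gm1 (b c : ℤ) : Type :=
  PresentedGroup ({(FreeGroup.of 0 * FreeGroup.of 1) ^ (-1 : ℤ) * (FreeGroup.of 0) ^ b,
    (FreeGroup.of 0 * FreeGroup.of 1) ^ (-1 : ℤ) * (FreeGroup.of 1) ^ c} :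
      Set (FreeGroup (Fin 2)))

private lemma aux_rel1 (b : ℤ) (n : ℕ) :
    ((Multiplicative.ofAdd (1 : ZMod n) * Multiplicative.ofAdd ((b : ZMod n) - 1)) ^ (-1 : ℤ)) *
      (Multiplicative.ofAdd (1 : ZMod n)) ^ b = 1 := by
  apply Multiplicative.toAdd.injective
  simp only [toAdd_mul, toAdd_zpow, toAdd_ofAdd, toAdd_one]
  simp only [zsmul_eq_mul]
  push_cast
  ring

private lemma aux_rel2 (b c : ℤ) (n : ℕ)
    (hbc : ((b * c - b - c : ℤ) : ZMod n) = 0) :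
    ((Multiplicative.ofAdd (1 : ZMod n) * Multiplicative.ofAdd ((b : ZMod n) - 1)) ^ (-1 : ℤ)) *
      (Multiplicative.ofAdd ((b : ZMod n) - 1)) ^ c = 1 := by
  apply Multiplicative.toAdd.injective
  simp only [toAdd_mul, toAdd_zpow, toAdd_ofAdd, toAdd_one]
  simp only [zsmul_eq_mul]
  push_cast at hbc ⊢
  linear_combination hbc

theorem stmt_4 (b c : ℤ) :
    Nonempty (Gm1 b c ≃* Multiplicative (ZMod (b * c - b - c).natAbs)) := by
  set n : ℕ := (b * c - b - c).natAbs with hn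
  clear_value n
  set rels : Set (FreeGroup (Fin 2)) :=
    {(FreeGroup.of 0 * FreeGroup.of 1) ^ (-1 : ℤ) * (FreeGroup.of 0) ^ b,
      (FreeGroup.of 0 * FreeGroup.of 1) ^ (-1 : ℤ) * (FreeGroup.of 1) ^ c} with hrels
  have hmk : ∀ r ∈ rels, PresentedGroup.mk rels r = 1 := fun r hr =>
    (QuotientGroup.eq_one_iff r).mpr (Subgroup.subset_normalClosure hr)
  obtain ⟨x, hx⟩ : ∃ x : Gm1 b c, x = PresentedGroup.of (rels := rels) 0 := ⟨_, rfl⟩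
  obtain ⟨y, hy⟩ : ∃ y : Gm1 b c, y = PresentedGroup.of (rels := rels) 1 := ⟨_, rfl⟩
  have hr1 : x * y = x ^ b := by
    have h := hmk _ (Set.mem_insert _ _)
    rw [map_mul, map_zpow, map_mul, map_zpow] at h
    have h' : ((PresentedGroup.of (rels := rels) 0 : Gm1 b c) *
        PresentedGroup.of (rels := rels) 1)⁻¹ *
        (PresentedGroup.of (rels := rels) 0) ^ b = 1 := by
      rw [← zpow_neg_one]; exact h
    rw [hx, hy]
    exact inv_mul_eq_one.mp h'
  have hr2 : x * y = y ^ c := by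
    have h := hmk _ (Set.mem_insert_of_mem _ rfl)
    rw [map_mul, map_zpow, map_mul, map_zpow] at h
    have h' : ((PresentedGroup.of (rels := rels) 0 : Gm1 b c) *
        PresentedGroup.of (rels := rels) 1)⁻¹ *
        (PresentedGroup.of (rels := rels) 1) ^ c = 1 := by
      rw [← zpow_neg_one]; exact h
    rw [hx, hy]
    exact inv_mul_eq_one.mp h'
  have hyx : y = x ^ (b - 1) := by
    have h : x ^ (b - 1) = x⁻¹ * x ^ b := by group
    rw [h, ← hr1, inv_mul_cancel_left]
  have hxy : x = y ^ (c - 1) := by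
    have h : y ^ (c - 1) = y ^ c * y⁻¹ := by group
    rw [h, ← hr2, mul_inv_cancel_right]
  have hord : x ^ (b * c - b - c) = 1 := by
    have hx2 : x = x ^ ((b - 1) * (c - 1)) := by
      conv_lhs => rw [hxy, hyx]
      rw [← zpow_mul]
    have h2 : x ^ ((b - 1) * (c - 1) - 1) = 1 := by
      rw [sub_eq_add_neg, zpow_add, ← hx2]
      group
    have he : (b - 1) * (c - 1) - 1 = b * c - b - c := by ring
    rwa [he] at h2
  have hbc : ((b * c - b - c : ℤ) : ZMod n) = 0 := by
    rw [hn, ZMod.intCast_zmod_eq_zero_iff_dvd]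
    exact Int.natAbs_dvd.mpr dvd_rfl
  -- forward homomorphism
  set f : Fin 2 → Multiplicative (ZMod n) :=
    ![Multiplicative.ofAdd (1 : ZMod n), Multiplicative.ofAdd ((b : ZMod n) - 1)] with hf
  have hφ : ∀ r ∈ rels, FreeGroup.lift f r = 1 := by
    intro r hr
    rcases hr with hr | hr <;> subst hr <;>
      simp only [map_mul, map_zpow, FreeGroup.lift_apply_of, hf, Matrix.cons_val_zero,
        Matrix.cons_val_one, Matrix.head_cons]
    · exact aux_rel1 b n
    · exact aux_rel2 b c n hbc
  set φ : Gm1 b c →* Multiplicative (ZMod n) := PresentedGroup.toGroup hφ with hφdef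
  have hφx : φ x = Multiplicative.ofAdd (1 : ZMod n) := by
    rw [hφdef, hx, PresentedGroup.toGroup.of]; simp [hf]
  have hφy : φ y = Multiplicative.ofAdd ((b : ZMod n) - 1) := by
    rw [hφdef, hy, PresentedGroup.toGroup.of]; simp [hf]
  -- reverse homomorphism
  set g : ℤ →+ Additive (Gm1 b c) := MonoidHom.toAdditiveRight (zpowersHom (Gm1 b c) x) with hg
  have hgval : ∀ m : ℤ, g m = Additive.ofMul (x ^ m) := fun m => rfl
  have hgn : g (n : ℤ) = 0 := by
    have hxn : x ^ (n : ℤ) = 1 := by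
      rcases Int.natAbs_eq (b * c - b - c) with h | h
      · rw [hn, ← h]; exact hord
      · rw [hn]
        have h2 : x ^ (-((b * c - b - c).natAbs : ℤ)) = 1 := by rw [← h]; exact hord
        rw [zpow_neg, inv_eq_one] at h2
        exact h2
    rw [hgval, hxn]; rfl
  set ψ : Multiplicative (ZMod n) →* Gm1 b c :=
    AddMonoidHom.toMultiplicativeLeft (ZMod.lift n ⟨g, hgn⟩) with hψ
  have hψval : ∀ m : ℤ, ψ (Multiplicative.ofAdd ((m : ZMod n))) = x ^ m := by
    intro m
    show ((ZMod.lift n ⟨g, hgn⟩) ((Multiplicative.ofAdd ((m : ZMod n))).toAdd)).toMul = x ^ m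
    rw [toAdd_ofAdd, ZMod.lift_coe]
    rfl
  have key1 : ψ.comp φ = MonoidHom.id _ := by
    apply PresentedGroup.ext
    intro i
    fin_cases i
    · show ψ (φ (PresentedGroup.of (rels := rels) 0)) = PresentedGroup.of (rels := rels) 0
      rw [← hx, hφx]
      have h1 : (((1 : ℤ) : ZMod n)) = (1 : ZMod n) := by push_cast; ring
      rw [← h1, hψval, zpow_one]
    · show ψ (φ (PresentedGroup.of (rels := rels) 1)) = PresentedGroup.of (rels := rels) 1
      rw [← hy, hφy]
      have h1 : (((b - 1 : ℤ) : ZMod n)) = ((b : ZMod n) - 1) := by push_cast; ring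
      rw [← h1, hψval, ← hyx]
  have key2 : φ.comp ψ = MonoidHom.id _ := by
    apply MonoidHom.ext
    intro z
    obtain ⟨m, hm⟩ := ZMod.intCast_surjective (n := n) z.toAdd
    have hz : z = Multiplicative.ofAdd ((m : ZMod n)) := by
      rw [hm]; rfl
    show φ (ψ z) = z
    rw [hz, hψval, map_zpow, hφx]
    apply Multiplicative.toAdd.injective
    rw [toAdd_zpow, toAdd_ofAdd, toAdd_ofAdd, zsmul_eq_mul, mul_one]
  exact ⟨MonoidHom.toMulEquiv φ ψ key1 key2⟩
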